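/- arXiv:2011.14758 — 2 statements merged into one kernel-verified Lean document; each statement's English description precedes it below -/
import Mathlib

section
/- Let alpha and beta be sequences in a field k whose ordinary generating functions Z_alpha(T) and Z_beta(T) are rational. Then the generating function of the Hadamard product sequence (alpha_n * beta_n)_{n>=0} is also rational. -/
/-!
Let `S` be the shift `u ↦ (n ↦ u (n + 1))` on sequences. Clearing denominators, `Z_u` is
rational exactly when `p(S) u = 0` for some nonzero polynomial `p` (the reversal of the denominator,
times a power of `X` absorbing the numerator), i.e. when the iterates `Sⁱ u` span a
finite-dimensional space. Since `S` is multiplicative, `Sⁱ (α β) = Sⁱ α · Sⁱ β` lies in the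
product of the spaces for `α` and `β`, which is again finite-dimensional.
-/

/-- A formal power series over a field `K` is rational if there are polynomials
`P, Q` with `Q(0) ≠ 0` and `Q · f = P` as formal power series. -/
def IsRationalSeries {K : Type*} [Field K] (f : PowerSeries K) : Prop :=
  ∃ P Q : Polynomial K, Q.coeff 0 ≠ 0 ∧ (Q : PowerSeries K) * f = (P : PowerSeries K)

open Polynomial Finset

namespace Module.End

variable {K M : Type*} [Field K] [AddCommGroup M] [Module K M] {f : Module.End K M} {x : M}

theorem exists_fg_forall_pow_apply_mem_of_aeval_eq_zero {p : K[X]} (hp : p ≠ 0)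
    (hpx : aeval f p x = 0) : ∃ U : Submodule K M, U.FG ∧ ∀ i, (f ^ i) x ∈ U := by
  let U := Submodule.span K ((fun j => (f ^ j) x) '' ↑(range (p.natDegree + 1)))
  refine ⟨U, Submodule.fg_span ((range _).finite_toSet.image _), fun i => ?_⟩
  have hpow_eq_mod : (f ^ i) x = aeval f (X ^ i % p) x := by
    conv_lhs =>
      rw [← aeval_X_pow (R := K) (x := f) (n := i), ← EuclideanDomain.mod_add_div (X ^ i) p]
    simp [hpx, mul_comm p, Module.End.mul_apply]
  have hdeg : (X ^ i % p).natDegree < p.natDegree + 1 :=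
    Nat.lt_succ_of_le (natDegree_le_natDegree (degree_mod_lt _ hp).le)
  rw [hpow_eq_mod, aeval_eq_sum_range' hdeg, LinearMap.sum_apply]
  exact U.sum_mem fun j hj => U.smul_mem _ (Submodule.subset_span ⟨j, hj, rfl⟩)

theorem exists_aeval_eq_zero_of_fg_of_forall_pow_apply_mem {U : Submodule K M} (hU : U.FG)
    (hx : ∀ i, (f ^ i) x ∈ U) : ∃ p : K[X], p ≠ 0 ∧ aeval f p x = 0 := by
  have : Module.Finite K U := Module.Finite.iff_fg.mpr hU
  let φ : K[X] →ₗ[K] U :=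
    LinearMap.codRestrict U ((LinearMap.applyₗ x).comp (aeval f).toLinearMap) fun q => by
      simp only [LinearMap.comp_apply, LinearMap.applyₗ_apply_apply, AlgHom.toLinearMap_apply,
        aeval_eq_sum_range, LinearMap.sum_apply, LinearMap.smul_apply]
      exact U.sum_mem fun i _ => U.smul_mem _ (hx i)
  by_contra! h
  refine Polynomial.not_finite (R := K) (Module.Finite.of_injective φ ?_)
  refine (injective_iff_map_eq_zero φ).mpr fun p hp => ?_
  by_contra hp0
  exact h p hp0 (congrArg Subtype.val hp)

end Module.End

def seqShift (R : Type*) [CommSemiring R] : Module.End R (ℕ → R) where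
  toFun u n := u (n + 1)
  map_add' _ _ := rfl
  map_smul' _ _ := rfl

section seqShift

variable {R : Type*} [CommSemiring R]

theorem seqShift_pow_apply (i : ℕ) (u : ℕ → R) (n : ℕ) :
    (seqShift R ^ i) u n = u (n + i) := by
  induction i generalizing n with
  | zero => rfl
  | succ i ih =>
    rw [pow_succ', Module.End.mul_apply]
    exact (ih (n + 1)).trans (congrArg u (by omega))

theorem seqShift_pow_mul (i : ℕ) (u v : ℕ → R) :
    (seqShift R ^ i) (u * v) = (seqShift R ^ i) u * (seqShift R ^ i) v := by
  ext n
  simp only [seqShift_pow_apply, Pi.mul_apply]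

theorem aeval_seqShift_apply {p : R[X]} {m : ℕ} (hp : p.natDegree < m) (u : ℕ → R) (n : ℕ) :
    aeval (seqShift R) p u n = ∑ i ∈ range m, p.coeff i * u (n + i) := by
  simp [aeval_eq_sum_range' hp, LinearMap.sum_apply, seqShift_pow_apply]

theorem coeff_add_mul_mk_eq_aeval_seqShift_reflect {Q : R[X]} {N : ℕ} (hQ : Q.natDegree ≤ N)
    (u : ℕ → R) (n : ℕ) :
    PowerSeries.coeff (n + N) ((Q : PowerSeries R) * PowerSeries.mk u) =
      aeval (seqShift R) (reflect N Q) u n := by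
  have hdeg : (reflect N Q).natDegree < N + 1 :=
    Nat.lt_succ_of_le (natDegree_reflect_le.trans (max_le le_rfl hQ))
  rw [aeval_seqShift_apply hdeg,
    PowerSeries.coeff_mul, Nat.sum_antidiagonal_eq_sum_range_succ_mk]
  simp only [coeff_coe, PowerSeries.coeff_mk]
  rw [← sum_subset (range_subset_range.mpr (by omega : N + 1 ≤ (n + N).succ)) fun j _ hj =>
    by rw [coeff_eq_zero_of_natDegree_lt (by simp at hj; omega), zero_mul],
    ← sum_range_reflect]
  refine sum_congr rfl fun i hi => ?_
  rw [mem_range] at hi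
  rw [coeff_reflect, revAt_le (by omega)]
  congr 2
  omega

end seqShift

theorem isRationalSeries_mk_iff {K : Type*} [Field K] {u : ℕ → K} :
    IsRationalSeries (PowerSeries.mk u) ↔
      ∃ p : K[X], p ≠ 0 ∧ aeval (seqShift K) p u = 0 := by
  constructor
  · rintro ⟨P, Q, hQ0, hQP⟩
    have hQ : Q ≠ 0 := fun h => hQ0 (by rw [h, coeff_zero])
    refine ⟨X ^ (P.natDegree + 1) * reflect Q.natDegree Q,
      mul_ne_zero (pow_ne_zero _ X_ne_zero) (reflect_eq_zero_iff.not.mpr hQ), ?_⟩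
    ext n
    rw [aeval_mul, aeval_X_pow, Module.End.mul_apply, seqShift_pow_apply,
      ← coeff_add_mul_mk_eq_aeval_seqShift_reflect le_rfl, hQP, coeff_coe,
      coeff_eq_zero_of_natDegree_lt (by omega), Pi.zero_apply]
  · rintro ⟨p, hp, hpu⟩
    have hdeg : (reflect p.natDegree p).natDegree ≤ p.natDegree :=
      natDegree_reflect_le.trans (max_le le_rfl le_rfl)
    refine ⟨PowerSeries.trunc p.natDegree (reflect p.natDegree p * PowerSeries.mk u),
      reflect p.natDegree p, by simpa [coeff_reflect] using hp, ?_⟩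
    ext n
    rw [coeff_coe, PowerSeries.coeff_trunc]
    split_ifs with hn
    · rfl
    obtain ⟨k, rfl⟩ : ∃ k, n = k + p.natDegree := ⟨n - p.natDegree, by omega⟩
    rw [coeff_add_mul_mk_eq_aeval_seqShift_reflect hdeg, reflect_reflect, hpu, Pi.zero_apply]

/-- If the generating functions of the sequences `α` and `β` are rational, then so is
the generating function of the Hadamard product sequence `(α_n * β_n)`. -/
theorem hadamard_product_rational {K : Type*} [Field K] (α β : ℕ → K)
    (hα : IsRationalSeries (PowerSeries.mk α)) (hβ : IsRationalSeries (PowerSeries.mk β)) :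
    IsRationalSeries (PowerSeries.mk fun n => α n * β n) := by
  obtain ⟨p, hp, hpα⟩ := isRationalSeries_mk_iff.mp hα
  obtain ⟨q, hq, hqβ⟩ := isRationalSeries_mk_iff.mp hβ
  obtain ⟨U, hU, hαU⟩ := Module.End.exists_fg_forall_pow_apply_mem_of_aeval_eq_zero hp hpα
  obtain ⟨V, hV, hβV⟩ := Module.End.exists_fg_forall_pow_apply_mem_of_aeval_eq_zero hq hqβ
  refine isRationalSeries_mk_iff.mpr
    (Module.End.exists_aeval_eq_zero_of_fg_of_forall_pow_apply_mem (hU.mul hV) fun i => ?_)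
  rw [show (fun n => α n * β n) = α * β from rfl, seqShift_pow_mul]
  exact Submodule.mul_mem_mul (hαU i) (hβV i)
end

section
/- In a k-linear rigid symmetric monoidal abelian category with End(1) = k, every nilpotent endomorphism has trace zero. -/
open CategoryTheory CategoryTheory.MonoidalCategory

section Aux

variable {C : Type*} [Category C] [MonoidalCategory C]

/-- The categorical trace of an endomorphism. -/
noncomputable def myTrace [BraidedCategory C] (X : C) [HasRightDual X] (f : X ⟶ X) :
    𝟙_ C ⟶ 𝟙_ C :=
  η_ X (Xᘁ) ≫ (f ▷ (Xᘁ)) ≫ (β_ X (Xᘁ)).hom ≫ ε_ X (Xᘁ)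

/-- Cyclicity of the trace. -/
theorem myTrace_comp [BraidedCategory C] [RightRigidCategory C]
    {X A : C} (p : X ⟶ A) (i : A ⟶ X) :
    myTrace X (p ≫ i) = myTrace A (i ≫ p) := by
  dsimp [myTrace]
  calc η_ X (Xᘁ) ≫ (p ≫ i) ▷ Xᘁ ≫ (β_ X (Xᘁ)).hom ≫ ε_ X (Xᘁ)
      = η_ X (Xᘁ) ≫ p ▷ Xᘁ ≫ (β_ A (Xᘁ)).hom ≫ (Xᘁ) ◁ i ≫ ε_ X (Xᘁ) := by
        rw [MonoidalCategory.comp_whiskerRight]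
        simp only [Category.assoc]
        rw [BraidedCategory.braiding_naturality_left_assoc]
    _ = η_ X (Xᘁ) ≫ p ▷ Xᘁ ≫ (β_ A (Xᘁ)).hom ≫ (iᘁ) ▷ A ≫ ε_ A (Aᘁ) := by
        rw [rightAdjointMate_comp_evaluation]
    _ = η_ X (Xᘁ) ≫ p ▷ Xᘁ ≫ A ◁ (iᘁ) ≫ (β_ A (Aᘁ)).hom ≫ ε_ A (Aᘁ) := by
        rw [BraidedCategory.braiding_naturality_right_assoc]
    _ = η_ X (Xᘁ) ≫ X ◁ (iᘁ) ≫ p ▷ (Aᘁ) ≫ (β_ A (Aᘁ)).hom ≫ ε_ A (Aᘁ) := by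
        rw [← whisker_exchange_assoc]
    _ = η_ A (Aᘁ) ≫ i ▷ (Aᘁ) ≫ p ▷ (Aᘁ) ≫ (β_ A (Aᘁ)).hom ≫ ε_ A (Aᘁ) := by
        rw [coevaluation_comp_rightAdjointMate_assoc]
    _ = η_ A (Aᘁ) ≫ (i ≫ p) ▷ (Aᘁ) ≫ (β_ A (Aᘁ)).hom ≫ ε_ A (Aᘁ) := by
        rw [MonoidalCategory.comp_whiskerRight, Category.assoc]

theorem myTrace_zero [BraidedCategory C] [RightRigidCategory C] [Preadditive C]
    [MonoidalPreadditive C] (X : C) :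
    myTrace X (0 : X ⟶ X) = 0 := by
  simp [myTrace]

/-- `p ≫ (i ≫ p)^k ≫ i = (p ≫ i)^(k+1)`. -/
theorem comp_pow_comp {X A : C} (p : X ⟶ A) (i : A ⟶ X)
    (g : CategoryTheory.End A) (hg : g = i ≫ p)
    (e : CategoryTheory.End X) (he : e = p ≫ i) (k : ℕ) :
    p ≫ (g ^ k : CategoryTheory.End A) ≫ i = (e ^ (k + 1) : CategoryTheory.End X) := by
  induction k with
  | zero =>
    simp [CategoryTheory.End.one_def, pow_one, he, CategoryTheory.End.mul_def]
  | succ j ihj =>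
    rw [pow_succ, CategoryTheory.End.mul_def, pow_succ e (j + 1), CategoryTheory.End.mul_def,
      ← ihj, hg, he]
    show p ≫ ((i ≫ p) ≫ _) ≫ i = (p ≫ i) ≫ p ≫ _ ≫ i
    simp only [Category.assoc]

/-- Trace of a nilpotent endomorphism vanishes. -/
theorem myTrace_nilpotent [BraidedCategory C] [RightRigidCategory C] [Abelian C]
    [MonoidalPreadditive C] :
    ∀ (m : ℕ) (X : C) (f : CategoryTheory.End X), f ^ m = 0 → 1 ≤ m →
      myTrace X (f : X ⟶ X) = 0 := by
  intro m
  induction m with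
  | zero => intro X f _ hm; omega
  | succ n ih =>
    intro X f hf _
    rcases Nat.eq_zero_or_pos n with hn | hn
    · subst hn
      have hf0 : (f : X ⟶ X) = 0 := by simpa using hf
      rw [hf0, myTrace_zero]
    · have hpi : (f : X ⟶ X) = Abelian.factorThruImage (f : X ⟶ X) ≫
          Abelian.image.ι (f : X ⟶ X) := (Abelian.image.fac (f : X ⟶ X)).symm
      set A := Abelian.image (f : X ⟶ X) with hA
      set p : X ⟶ A := Abelian.factorThruImage (f : X ⟶ X) with hp
      set i : A ⟶ X := Abelian.image.ι (f : X ⟶ X) with hi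
      set g : CategoryTheory.End A := i ≫ p with hg
      have key := comp_pow_comp p i g hg f hpi n
      rw [hf] at key
      have h1 : (g ^ n : CategoryTheory.End A) ≫ i = 0 := by
        have hepi : Epi p := by rw [hp]; infer_instance
        rw [← cancel_epi p, Limits.comp_zero]
        simpa using key
      have hgn : g ^ n = 0 := by
        have hmono : Mono i := by rw [hi]; infer_instance
        have h2 : (g ^ n : A ⟶ A) = (0 : A ⟶ A) := by
          rw [← cancel_mono i, Limits.zero_comp]; exact h1
        exact h2
      have htr := ih A g hgn hn
      calc myTrace X (f : X ⟶ X) = myTrace X (p ≫ i) := by rw [hpi]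
        _ = myTrace A (i ≫ p) := myTrace_comp p i
        _ = 0 := htr

end Aux

/-- In a `k`-linear rigid symmetric monoidal abelian category with `End(1) = k`,
every nilpotent endomorphism has trace zero.  The trace of `f : X ⟶ X` is the
endomorphism of the unit object given by composing the coevaluation, `f ⊗ id`,
the symmetry, and the evaluation. -/
theorem trace_of_nilpotent_eq_zero {k : Type*} [Field k]
    {C : Type*} [Category C] [Abelian C] [Linear k C]
    [MonoidalCategory C] [MonoidalPreadditive C] [MonoidalLinear k C]
    [SymmetricCategory C] [RightRigidCategory C]
    (hEnd : Function.Bijective fun c : k => c • (𝟙 (𝟙_ C)))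
    (X : C) (f : CategoryTheory.End X) (m : ℕ) (hm : 1 ≤ m) (hf : f ^ m = 0) :
    η_ X (Xᘁ) ≫ ((f : X ⟶ X) ▷ (Xᘁ)) ≫ (β_ X (Xᘁ)).hom ≫ ε_ X (Xᘁ) = 0 :=
  myTrace_nilpotent m X f hf hm
end
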